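/- arXiv:0810.5587 — 7 statements merged into one kernel-verified Lean document; each statement's English description precedes it below -/
import Mathlib

section
/- For every ultrafilter D on a set I and all infinite cardinals κ and ν, |∏_D ν^κ| ≤ |∏_D ν^{<κ}|^{cf(∏_D ⟨κ,<⟩)}. -/
/-!
Identify `ν ^ κ` with the functions `K → ν`, where `K = κ.ord.ToType`, and code `a : K → ν`
at each `x : K` by the pair `(x, a ↾ Iic x)`. Initial segments of `K` have fewer than `κ`
elements, so there are at most `ν ^< κ` such pairs. Fix a cofinal set `S` of the ultrapower
`∏_D K` of size `cf(∏_D K)` and send `[f]` to the family `[g] ∈ S ↦ [i ↦ (g i, f i ↾ Iic (g i))]`.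
This is injective: if `f ≠ f'` `D`-almost everywhere, pick `β i` with `f i (β i) ≠ f' i (β i)`
and `[g] ∈ S` above `[β]`; then `f i` and `f' i` differ on `Iic (g i)` for `D`-almost all `i`.
-/

universe u

open Cardinal

namespace Paper

/-- Form I: the ultrafilter `D` is `(a, b)`-regular: there is a family of `b`-many
members of `D` such that the intersection of any `a`-many of them is empty. -/
def IsRegularUF {I : Type u} (D : Ultrafilter I) (a b : Cardinal.{u}) : Prop :=
  ∃ X : b.out → Set I, (∀ β, X β ∈ D) ∧
    ∀ B : Set b.out, #B = a → ⋂ β ∈ B, X β = ∅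

/-- `D` is `κ`-decomposable: there is `f : I → κ` such that the preimage of any
subset of size `< κ` is not in `D`. -/
def IsDecomposable {I : Type u} (D : Ultrafilter I) (κ : Cardinal.{u}) : Prop :=
  ∃ f : I → κ.out, ∀ X : Set κ.out, #X < κ → f ⁻¹' X ∉ D

/-- The cardinality of the ultrapower `∏_D c` of a cardinal `c` modulo `D`. -/
noncomputable def ultraPowCard {I : Type u} (D : Ultrafilter I) (c : Cardinal.{u}) :
    Cardinal.{u} :=
  #((D : Filter I).Germ c.out)

/-- The cofinality of the linearly ordered ultrapower `∏_D ⟨κ, <⟩`: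
the least cardinality of a cofinal subset. -/
noncomputable def germOrderCof {I : Type u} (D : Ultrafilter I) (κ : Cardinal.{u}) :
    Cardinal.{u} :=
  sInf { c | ∃ S : Set ((D : Filter I).Germ κ.ord.ToType), #S = c ∧ ∀ x, ∃ y ∈ S, x ≤ y }

/-- `f` is a `κ`-least function for `D`. -/
def IsKLeastFunction {I : Type u} (D : Ultrafilter I) (κ : Cardinal.{u})
    (f : I → Ordinal.{u}) : Prop :=
  (∀ i, f i < κ.ord) ∧
  (∀ α < κ.ord, { i | α < f i } ∈ D) ∧
  ∀ g : I → Ordinal.{u}, (∀ i, g i < κ.ord) → { i | g i < f i } ∈ D →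
    ∃ α < κ.ord, { i | g i < α } ∈ D

/-- The product of two ultrafilters:
`X ∈ D ×ᵤ D'` iff `{i | {i' | (i,i') ∈ X} ∈ D'} ∈ D`. -/
def uprod {I I' : Type u} (D : Ultrafilter I) (D' : Ultrafilter I') : Ultrafilter (I × I') :=
  D.bind fun i => D'.map fun i' => (i, i')

/-- The `D`-sum of the ultrafilters `Di`. -/
def usum {I : Type u} {J : I → Type u} (D : Ultrafilter I) (Di : ∀ i, Ultrafilter (J i)) :
    Ultrafilter (Σ i, J i) :=
  D.bind fun i => (Di i).map fun j => ⟨i, j⟩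

/-- `D` is `κ`-complete: intersections of fewer than `κ` members of `D` are in `D`. -/
def IsComplete {I : Type u} (D : Ultrafilter I) (κ : Cardinal.{u}) : Prop :=
  ∀ S : Set (Set I), #S < κ → (∀ s ∈ S, s ∈ D) → ⋂₀ S ∈ D

/-- `COV(λ, λ', μ)`: the least cardinality of a family of subsets of `λ`, each of
cardinality `< λ'`, such that every subset of `λ` of cardinality `< μ` is contained
in a member of the family. -/
noncomputable def cov (lam lam' μ : Cardinal.{u}) : Cardinal.{u} :=
  sInf { c | ∃ H : Set (Set lam.out), #H = c ∧ (∀ x ∈ H, #x < lam') ∧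
      ∀ s : Set lam.out, #s < μ → ∃ x ∈ H, s ⊆ x }

/-- Iterated beth: `bethIter 0 lam = lam`, `bethIter (m+1) lam = 2 ^ bethIter m lam`. -/
def bethIter (m : ℕ) (lam : Cardinal.{u}) : Cardinal.{u} :=
  (fun c => (2 : Cardinal.{u}) ^ c)^[m] lam

theorem le_powerlt_self {a : Cardinal.{u}} (ha : 2 ≤ a) (b : Cardinal.{u}) : b ≤ a ^< b := by
  by_contra! h
  have hcantor : a ^< b < a ^ (a ^< b) := (cantor _).trans_le (power_le_power_right ha)
  exact (le_powerlt a h).not_gt hcantor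

theorem mk_Iic_lt_of_aleph0_le {κ : Cardinal.{u}} (hκ : ℵ₀ ≤ κ) (x : κ.ord.ToType) :
    #(Set.Iic x) < κ := by
  have hIio : #(Set.Iio x) < κ := by simpa using Cardinal.mk_Iio_lt x (by simp)
  calc #(Set.Iic x) = #(insert x (Set.Iio x) : Set κ.ord.ToType) := by rw [Set.Iio_insert]
    _ ≤ #(Set.Iio x) + 1 := mk_insert_le
    _ < κ := add_lt_of_lt hκ hIio (one_lt_aleph0.trans_le hκ)

theorem mk_sigma_Iic_fun_le_powerlt {κ : Cardinal.{u}} (hκ : ℵ₀ ≤ κ) {α : Type u}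
    (hα : 2 ≤ #α) : #(Σ x : κ.ord.ToType, (Set.Iic x → α)) ≤ #α ^< κ := by
  have hκle : κ ≤ #α ^< κ := le_powerlt_self hα κ
  calc #(Σ x : κ.ord.ToType, (Set.Iic x → α))
      = Cardinal.sum fun x : κ.ord.ToType => #α ^ #(Set.Iic x) := by
        simp only [mk_sigma, power_def]
    _ ≤ Cardinal.sum fun _ : κ.ord.ToType => #α ^< κ :=
        sum_le_sum _ _ fun x => le_powerlt _ (mk_Iic_lt_of_aleph0_le hκ x)
    _ = κ * #α ^< κ := by rw [sum_const', mk_ord_toType]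
    _ = #α ^< κ := by rw [mul_eq_max hκ (hκ.trans hκle), max_eq_right hκle]

theorem mk_germ_le_of_mk_le {I : Type u} (l : Filter I) {α β : Type u} (h : #α ≤ #β) :
    #(l.Germ α) ≤ #(l.Germ β) := by
  obtain ⟨e⟩ := h
  refine mk_le_of_injective (f := Filter.Germ.map e) fun x y hxy => ?_
  induction x using Filter.Germ.inductionOn with | h f => ?_
  induction y using Filter.Germ.inductionOn with | h g => ?_
  simp only [Filter.Germ.map_coe, Filter.Germ.coe_eq] at hxy ⊢
  exact hxy.mono fun i hi => e.injective hi

theorem exists_cofinal_card_eq_germOrderCof {I : Type u} (D : Ultrafilter I) (κ : Cardinal.{u}) :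
    ∃ S : Set ((D : Filter I).Germ κ.ord.ToType), #S = germOrderCof D κ ∧
      ∀ x, ∃ y ∈ S, x ≤ y :=
  csInf_mem (⟨_, Set.univ, rfl, fun x => ⟨x, trivial, le_rfl⟩⟩ :
    Set.Nonempty {c | ∃ S : Set ((D : Filter I).Germ κ.ord.ToType), #S = c ∧ ∀ x, ∃ y ∈ S, x ≤ y})

def restrictIic {K α : Type*} [Preorder K] (a : K → α) (x : K) : Σ y : K, (Set.Iic y → α) :=
  ⟨x, fun z => a z⟩

theorem injective_germ_map₂_restrictIic {I K α : Type*} [Preorder K] (D : Ultrafilter I)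
    {S : Set ((D : Filter I).Germ K)} (hS : ∀ x, ∃ y ∈ S, x ≤ y) :
    Function.Injective fun (x : (D : Filter I).Germ (K → α)) (s : S) =>
      Filter.Germ.map₂ restrictIic x s.1 := by
  intro x x' hxx'
  induction x using Filter.Germ.inductionOn with | h f => ?_
  induction x' using Filter.Germ.inductionOn with | h f' => ?_
  by_contra hne
  have hdiff : ∀ᶠ i in (D : Filter I), ∃ k, f i k ≠ f' i k :=
    (Ultrafilter.eventually_not.2 (Filter.Germ.coe_eq.not.1 hne)).mono fun i hi =>
      Function.ne_iff.1 hi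
  obtain ⟨β, hβ⟩ := hdiff.choice
  obtain ⟨s, hsS, hβs⟩ := hS β
  induction s using Filter.Germ.inductionOn with | h g => ?_
  have hres : (fun i => restrictIic (f i) (g i)) =ᶠ[D] fun i => restrictIic (f' i) (g i) := by
    simpa only [Filter.Germ.map₂_coe, Filter.Germ.coe_eq] using congrFun hxx' ⟨g, hsS⟩
  obtain ⟨i, hi, hβi, hgi⟩ := (hres.and (hβ.and (Filter.Germ.coe_le.1 hβs))).exists
  have hfun := eq_of_heq (Sigma.mk.inj_iff.1 hi).2
  exact hβi (congrFun hfun ⟨β i, hgi⟩)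

/-- Proposition 4.1: `|∏_D ν^κ| ≤ |∏_D ν^{<κ}| ^ cf(∏_D ⟨κ, <⟩)`. -/
theorem stmt4 {I : Type u} (D : Ultrafilter I) (κ ν : Cardinal.{u})
    (hκ : ℵ₀ ≤ κ) (hν : ℵ₀ ≤ ν) :
    ultraPowCard D (ν ^ κ) ≤ ultraPowCard D (ν ^< κ) ^ germOrderCof D κ := by
  set K := κ.ord.ToType
  have h2ν : 2 ≤ #ν.out := by simpa using (natCast_lt_aleph0 (n := 2)).le.trans hν
  obtain ⟨S, hS, hcof⟩ := exists_cofinal_card_eq_germOrderCof D κ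
  calc ultraPowCard D (ν ^ κ) ≤ #((D : Filter I).Germ (K → ν.out)) :=
        mk_germ_le_of_mk_le _ (by simp [K])
    _ ≤ #(S → (D : Filter I).Germ (Σ x : K, (Set.Iic x → ν.out))) :=
        mk_le_of_injective (injective_germ_map₂_restrictIic D hcof)
    _ ≤ ultraPowCard D (ν ^< κ) ^ germOrderCof D κ := by
        rw [← power_def, hS]
        refine power_le_power_right (mk_germ_le_of_mk_le _ ?_)
        simpa using mk_sigma_Iic_fun_le_powerlt hκ h2ν

end Paper
end

section
/- Let λ be a limit cardinal and D an ultrafilter such that for every cardinal ν' < λ there is a cardinal ν with ν' < ν < λ for which D is ν-decomposable. Then D is κ-decomposable for some cardinal κ with λ ≤ κ ≤ λ^{cf λ}. -/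
/-!
Choose ordinals `s i < λ` (`i ∈ ι`, `#ι = cf λ`) cofinal in `λ`, and for each `i` a cardinal
`ν i` with `(s i).card < ν i < λ` and a map `f i : I → ν i` decomposing `D`. Push `D` forward
along `x ↦ (f i x)ᵢ` to an ultrafilter `U` on `∏ᵢ ν i`, a set of size at most `λ ^ cf λ`.
Every ultrafilter is decomposable at the least cardinality `κ` of its members, and decomposability
passes back from `U` to `D`. Projecting a member of `U` to coordinate `i` gives a set whose
preimage under `f i` lies in `D`, so `ν i ≤ κ` for all `i`, whence `λ ≤ κ`.
-/

universe u

open Cardinal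

namespace Paper

section MinMemCard

variable {P : Type u} (U : Ultrafilter P)

noncomputable def minMemCard : Cardinal.{u} :=
  ⨅ X : {X : Set P // X ∈ U}, #X

theorem minMemCard_le_mk {X : Set P} (hX : X ∈ U) : minMemCard U ≤ #X :=
  ciInf_le' (fun X : {X : Set P // X ∈ U} => #X.1) ⟨X, hX⟩

theorem exists_mem_mk_eq_minMemCard : ∃ X ∈ U, #X = minMemCard U := by
  have : Nonempty {X : Set P // X ∈ U} := ⟨⟨Set.univ, Filter.univ_mem⟩⟩
  obtain ⟨⟨X, hX⟩, hXmin⟩ := ciInf_mem fun X : {X : Set P // X ∈ U} => #X.1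
  exact ⟨X, hX, hXmin⟩

/-- A bijection of a smallest member `X₀` of `U` onto `minMemCard U`, extended arbitrarily off
`X₀`: fewer than `minMemCard U` values pull back, inside `X₀`, to a set too small to be in `U`. -/
theorem isDecomposable_minMemCard : IsDecomposable U (minMemCard U) := by
  obtain ⟨X₀, hX₀, hcard⟩ := exists_mem_mk_eq_minMemCard U
  obtain ⟨e⟩ : Nonempty (X₀ ≃ (minMemCard U).out) := by rw [← Cardinal.eq, hcard, mk_out]
  obtain ⟨x₀, hx₀⟩ := U.nonempty_of_mem hX₀
  classical
  let F : P → (minMemCard U).out := fun p => if hp : p ∈ X₀ then e ⟨p, hp⟩ else e ⟨x₀, hx₀⟩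
  refine ⟨F, fun Y hY hFY => ?_⟩
  have hsub : F ⁻¹' Y ∩ X₀ ⊆ Subtype.val '' (e ⁻¹' Y) := fun p ⟨hpY, hp⟩ =>
    ⟨⟨p, hp⟩, by simpa only [F, Set.mem_preimage, dif_pos hp] using hpY, rfl⟩
  have hsmall : #(Subtype.val '' (e ⁻¹' Y)) < minMemCard U :=
    mk_image_le.trans_lt ((mk_preimage_of_injective _ _ e.injective).trans_lt hY)
  exact hsmall.not_ge
    (minMemCard_le_mk U (U.toFilter.mem_of_superset (Filter.inter_mem hFY hX₀) hsub))

end MinMemCard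

theorem IsDecomposable.of_map {I P : Type u} {D : Ultrafilter I} {g : I → P} {κ : Cardinal.{u}}
    (h : IsDecomposable (D.map g) κ) : IsDecomposable D κ :=
  let ⟨f, hf⟩ := h
  ⟨f ∘ g, fun X hX => hf X hX⟩

theorem le_minMemCard_map {I P α : Type u} {D : Ultrafilter I} {g : I → P} (φ : P → α)
    {κ : Cardinal.{u}} (h : ∀ X : Set α, #X < κ → (φ ∘ g) ⁻¹' X ∉ D) :
    κ ≤ minMemCard (D.map g) := by
  obtain ⟨X, hX, hcard⟩ := exists_mem_mk_eq_minMemCard (D.map g)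
  refine hcard ▸ not_lt.mp fun hlt => h (φ '' X) (mk_image_le.trans_lt hlt) ?_
  exact D.toFilter.mem_of_superset (Ultrafilter.mem_map.mp hX) fun i hi => ⟨g i, hi, rfl⟩

theorem mk_pi_out_le_pow {ι : Type u} {ν : ι → Cardinal.{u}} {c : Cardinal.{u}}
    (h : ∀ i, ν i ≤ c) : #(∀ i, (ν i).out) ≤ c ^ #ι := by
  simpa only [mk_pi, mk_out, prod_const'] using prod_le_prod _ _ h

theorem Ordinal.exists_cofinal_family (o : Ordinal.{u}) :
    ∃ (ι : Type u) (s : ι → Ordinal.{u}), #ι = o.cof ∧ (∀ i, s i < o) ∧ ∀ a < o, ∃ i, a ≤ s i := by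
  obtain ⟨t, ht, hcard⟩ := Order.exists_cof_eq o.ToType
  refine ⟨t, fun x => ((x : o.ToType) : Ordinal), by rw [hcard, Ordinal.cof_toType],
    fun x => (x.1.toOrd).2, fun a ha => ?_⟩
  obtain ⟨y, hy, hay⟩ := ht (Ordinal.ToType.mk ⟨a, ha⟩)
  exact ⟨⟨y, hy⟩, Ordinal.ToType.mk.le_symm_apply.mpr hay⟩

theorem le_of_forall_card_lt {ι : Type u} {s : ι → Ordinal.{u}} {c κ : Cardinal.{u}}
    (hs : ∀ a < c.ord, ∃ i, a ≤ s i) (h : ∀ i, (s i).card < κ) : c ≤ κ := by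
  by_contra! hκc
  obtain ⟨i, hi⟩ := hs κ.ord (ord_lt_ord.mpr hκc)
  exact (h i).not_ge (ord_le.mp hi)

theorem stmt8_general {I : Type u} (D : Ultrafilter I) (lam : Cardinal.{u})
    (hdec : ∀ ν' < lam, ∃ ν, ν' < ν ∧ ν < lam ∧ IsDecomposable D ν) :
    ∃ κ, lam ≤ κ ∧ κ ≤ lam ^ lam.ord.cof ∧ IsDecomposable D κ := by
  obtain ⟨ι, s, hι, hs_lt, hs_cofinal⟩ := Ordinal.exists_cofinal_family lam.ord
  choose ν hsν hνlam f hf using fun i => hdec (s i).card (lt_ord.mp (hs_lt i))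
  let U := D.map fun x i => f i x
  refine ⟨minMemCard U, ?_, ?_, (isDecomposable_minMemCard U).of_map⟩
  · refine le_of_forall_card_lt hs_cofinal fun i => (hsν i).trans_le ?_
    exact le_minMemCard_map (fun p => p i) (hf i)
  · calc minMemCard U ≤ #(Set.univ : Set (∀ i, (ν i).out)) := minMemCard_le_mk U Filter.univ_mem
      _ = #(∀ i, (ν i).out) := mk_univ
      _ ≤ lam ^ lam.ord.cof := hι ▸ mk_pi_out_le_pow fun i => (hνlam i).le

/-- Theorem 5.1(a): if `λ` is a limit cardinal and there are arbitrarily large `ν < λ`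
for which `D` is `ν`-decomposable, then `D` is `κ`-decomposable for some
`λ ≤ κ ≤ λ^(cf λ)`. -/
theorem stmt8 {I : Type u} (D : Ultrafilter I) (lam : Cardinal.{u})
    (hlam : ℵ₀ ≤ lam) (hlim : ∀ c < lam, Order.succ c < lam)
    (hdec : ∀ ν' < lam, ∃ ν, ν' < ν ∧ ν < lam ∧ IsDecomposable D ν) :
    ∃ κ, lam ≤ κ ∧ κ ≤ lam ^ lam.ord.cof ∧ IsDecomposable D κ :=
  stmt8_general D lam hdec

end Paper
end

section
/- Let μ be a singular cardinal, λ < μ an infinite cardinal, and D an ultrafilter which is (λ, μ')-regular for all cardinals μ' < μ. If at least one of the following holds: (a) λ is regular; (b) D is (cf λ, cf μ)-regular; (c) the cofinality of ∏_D ⟨cf λ, <⟩ is different from cf μ; (d) cf λ ≠ cf μ and D is not (cf λ, cf λ)-regular; then D is (λ, μ)-regular. -/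
universe u

open Cardinal

namespace Paper

/-! Regularity of `D` for `(λ, β)` amounts to a cover `f : I → Set β` by sets of size `< λ` such
that every point of `β` lies in `f i` for `D`-almost all `i`. Index cardinals `w a < μ`, cofinal
in `μ`, by `a ∈ cf μ`, and take such covers `f a` of each `w a` and `g` of the index set. Over
`Σ a, w a`, a set of size at least `μ`, the unions of the `f a i` over those `a ∈ g i` with
`#(f a i) ≤ ν i` form such a cover, provided there is one bound `ν i < λ` such that for every `a`,
`#(f a i) ≤ ν i` for `D`-almost all `i`.

Under (a) or (b) the index set has a cover by sets of size `< cf λ`, so the supremum of those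
sizes is already `< λ`. Under (c), encode each size function, through a cofinal sequence of
length `cf λ` in `λ`, as an element of `∏_D cf λ`. As the cofinality of that ultrapower is not
`cf μ`, fewer than `cf μ` of its elements dominate all of these, and the fibre over one of them
still carries weights cofinal in `μ`; inside a fibre a single bound works. Case (d) reduces to
(c): if `D` is not `(cf λ, cf λ)`-regular, the constants are cofinal in `∏_D cf λ`, whose
cofinality is then `cf λ`. -/

section

open Filter

variable {I : Type u} {D : Ultrafilter I}

def HasCardLTCover (D : Ultrafilter I) (a : Cardinal.{u}) (β : Type u) : Prop :=
  ∃ f : I → Set β, (∀ i, #(f i) < a) ∧ ∀ x, ∀ᶠ i in (D : Filter I), x ∈ f i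

theorem HasCardLTCover.of_mk_le {a : Cardinal.{u}} {β γ : Type u} (h : HasCardLTCover D a β)
    (hγ : #γ ≤ #β) : HasCardLTCover D a γ := by
  obtain ⟨f, hf_card, hf_mem⟩ := h
  obtain ⟨e⟩ := hγ
  exact ⟨fun i => e ⁻¹' f i,
    fun i => (mk_preimage_of_injective e _ e.injective).trans_lt (hf_card i),
    fun x => hf_mem (e x)⟩

theorem isRegularUF_iff_hasCardLTCover {a b : Cardinal.{u}} :
    IsRegularUF D a b ↔ HasCardLTCover D a b.out := by
  constructor
  · rintro ⟨X, hX_mem, hX_inter⟩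
    refine ⟨fun i => {β | i ∈ X β}, fun i => ?_, hX_mem⟩
    by_contra! hle
    obtain ⟨B, hB_sub, hB_card⟩ := le_mk_iff_exists_subset.1 hle
    have hi : i ∈ ⋂ β ∈ B, X β := Set.mem_iInter₂.2 fun β hβ => hB_sub hβ
    rw [hX_inter B hB_card] at hi
    exact hi
  · rintro ⟨f, hf_card, hf_mem⟩
    refine ⟨fun β => {i | β ∈ f i}, hf_mem, fun B hB => ?_⟩
    refine Set.eq_empty_iff_forall_notMem.2 fun i hi => ?_
    have hB_sub : B ⊆ f i := fun β hβ => Set.mem_iInter₂.1 hi β hβ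
    exact (hB ▸ mk_le_mk_of_subset hB_sub).not_gt (hf_card i)

theorem isRegularUF_mk_iff {a : Cardinal.{u}} {β : Type u} :
    IsRegularUF D a #β ↔ HasCardLTCover D a β := by
  rw [isRegularUF_iff_hasCardLTCover]
  exact ⟨fun h => h.of_mk_le (mk_out _).ge, fun h => h.of_mk_le (mk_out _).le⟩

theorem HasCardLTCover.sigma {lam : Cardinal.{u}} (hlam : ℵ₀ ≤ lam) {A : Type u}
    {β : A → Type u} (hA : HasCardLTCover D lam A) (f : ∀ a, I → Set (β a))
    (hf : ∀ a b, ∀ᶠ i in (D : Filter I), b ∈ f a i) (ν : I → Cardinal.{u})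
    (hν : ∀ i, ν i < lam) (hfν : ∀ a, ∀ᶠ i in (D : Filter I), #(f a i) ≤ ν i) :
    HasCardLTCover D lam (Σ a, β a) := by
  obtain ⟨g, hg_card, hg_mem⟩ := hA
  let sel : I → Set A := fun i => {a ∈ g i | #(f a i) ≤ ν i}
  refine ⟨fun i => ⋃ a ∈ sel i, Sigma.mk a '' f a i, fun i => ?_, fun ⟨a, b⟩ => ?_⟩
  · calc #(⋃ a ∈ sel i, Sigma.mk a '' f a i : Set (Σ a, β a))
        ≤ #(sel i) * ⨆ a : sel i, #(Sigma.mk a.1 '' f a.1 i) := mk_biUnion_le _ _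
      _ ≤ #(g i) * ν i := by
        gcongr
        · exact mk_le_mk_of_subset fun a ha => ha.1
        · exact ciSup_le' fun a => mk_image_le.trans a.2.2
      _ < lam := mul_lt_of_lt hlam (hg_card i) (hν i)
  · filter_upwards [hg_mem a, hf a b, hfν a] with i hga hfb hfa
    exact Set.mem_biUnion ⟨hga, hfa⟩ ⟨b, hfb, rfl⟩

theorem HasCardLTCover.sigma_of_cof {lam : Cardinal.{u}} (hlam : ℵ₀ ≤ lam) {A : Type u}
    {β : A → Type u} (hA : HasCardLTCover D lam.ord.cof A)
    (hβ : ∀ a, HasCardLTCover D lam (β a)) : HasCardLTCover D lam (Σ a, β a) := by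
  choose f hf_card hf_mem using hβ
  obtain ⟨g, hg_card, hg_mem⟩ := hA
  refine HasCardLTCover.sigma hlam
    ⟨g, fun i => (hg_card i).trans_le (Ordinal.cof_ord_le lam), hg_mem⟩ f hf_mem
    (fun i => ⨆ a : g i, #(f a i)) (fun i => iSup_lt_of_lt_cof_ord (hg_card i) fun a => hf_card a i)
    fun a => ?_
  filter_upwards [hg_mem a] with i hi
  exact le_ciSup bddAbove_of_small (⟨a, hi⟩ : g i)

theorem germOrderCof_eq_cof (D : Ultrafilter I) (κ : Cardinal.{u}) :
    germOrderCof D κ = Order.cof ((D : Filter I).Germ κ.ord.ToType) := by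
  refine le_antisymm ?_ (le_csInf ?_ ?_)
  · obtain ⟨S, hS, hS_card⟩ := Order.exists_cof_eq ((D : Filter I).Germ κ.ord.ToType)
    exact csInf_le' ⟨S, hS_card, hS⟩
  · exact ⟨_, Set.univ, rfl, fun x => ⟨x, trivial, le_rfl⟩⟩
  · rintro _ ⟨S, rfl, hS⟩
    exact Order.cof_le hS

theorem exists_card_lt_forall_le_of_cof_ne {P A : Type u} [LinearOrder P] (h : A → P)
    (hA : 1 < #A) (hcof : Order.cof P ≠ #A) : ∃ S : Set P, #S < #A ∧ ∀ a, ∃ s ∈ S, h a ≤ s := by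
  rcases hcof.lt_or_gt with hlt | hgt
  · obtain ⟨S, hS, hS_card⟩ := Order.exists_cof_eq P
    exact ⟨S, hS_card ▸ hlt, fun a => hS (h a)⟩
  · have : ¬ IsCofinal (Set.range h) := fun hcof =>
      (Order.cof_le hcof |>.trans mk_range_le).not_gt hgt
    obtain ⟨p, hp⟩ : ∃ p, ∀ a, h a < p := by
      simpa [IsCofinal, not_le] using this
    exact ⟨{p}, by simpa using hA, fun a => ⟨p, rfl, (hp a).le⟩⟩

theorem exists_monotone_forall_lt_forall_exists_le (κ : Cardinal.{u}) :
    ∃ Λ : κ.ord.cof.ord.ToType → Cardinal.{u},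
      Monotone Λ ∧ (∀ j, Λ j < κ) ∧ ∀ c < κ, ∃ j, c ≤ Λ j := by
  obtain ⟨f, hf⟩ := Ordinal.exists_isFundamentalSeq (o := κ.ord) rfl
  refine ⟨fun j => (f (Ordinal.ToType.mk.symm j)).1.card, fun j k hjk => ?_, fun j => ?_,
    fun c hc => ?_⟩
  · exact Ordinal.card_le_card (hf.strictMono.monotone (Ordinal.ToType.mk.symm.monotone hjk))
  · exact lt_ord.1 (f _).2
  · obtain ⟨_, ⟨j, rfl⟩, hj⟩ := hf.isCofinal_range ⟨c.ord, ord_lt_ord.2 hc⟩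
    refine ⟨Ordinal.ToType.mk j, ?_⟩
    simpa using Ordinal.card_le_card (show c.ord ≤ (f j).1 from hj)

theorem exists_forall_lt_forall_exists_lt_of_isSuccLimit {κ : Cardinal.{u}}
    (hκ : Order.IsSuccLimit κ) :
    ∃ w : κ.ord.cof.ord.ToType → Cardinal.{u}, (∀ j, w j < κ) ∧ ∀ c < κ, ∃ j, c < w j := by
  obtain ⟨w, -, hw_lt, hw_le⟩ := exists_monotone_forall_lt_forall_exists_le κ
  refine ⟨w, hw_lt, fun c hc => ?_⟩
  exact (hw_le _ (hκ.succ_lt hc)).imp fun _ =>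
    (Order.lt_succ_of_not_isMax hc.not_isMax).trans_le

theorem exists_card_lt_eventually_le_bounds {lam : Cardinal.{u}} {A : Type u}
    (s : A → I → Cardinal.{u}) (hs : ∀ a i, s a i < lam) (hA : 1 < #A)
    (hcof : germOrderCof D lam.ord.cof ≠ #A) :
    ∃ (S : Type u) (p : A → S) (ν : S → I → Cardinal.{u}), #S < #A ∧ (∀ t i, ν t i < lam) ∧
      ∀ a, ∀ᶠ i in (D : Filter I), s a i ≤ ν (p a) i := by
  obtain ⟨Λ, hΛ_mono, hΛ_lt, hΛ_le⟩ := exists_monotone_forall_lt_forall_exists_le lam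
  choose level hlevel using fun a i => hΛ_le (s a i) (hs a i)
  rw [germOrderCof_eq_cof] at hcof
  obtain ⟨S, hS_card, hS⟩ := exists_card_lt_forall_le_of_cof_ne
    (fun a => ((level a : I → _) : (D : Filter I).Germ _)) hA hcof
  choose p hpS hp using hS
  choose H hH using fun t : S => Quot.exists_rep t.1
  refine ⟨S, fun a => ⟨p a, hpS a⟩, fun t i => Λ (H t i), hS_card, fun t i => hΛ_lt _,
    fun a => ?_⟩
  filter_upwards [Germ.coe_le.1 ((hp a).trans_eq (hH ⟨p a, hpS a⟩).symm)] with i hi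
  exact (hlevel a i).trans (hΛ_mono hi)

theorem germOrderCof_eq_of_not_isRegularUF {κ : Cardinal.{u}} (h : ¬ IsRegularUF D κ κ) :
    germOrderCof D κ = κ.ord.cof := by
  have hcofinal :
      IsCofinal (Set.range fun j : κ.ord.ToType => (Germ.const j : (D : Filter I).Germ _)) := by
    rintro ⟨x⟩
    by_contra! hx
    have hcover : HasCardLTCover D κ κ.ord.ToType :=
      ⟨fun i => Set.Iio (x i), fun i => (mk_Iio_lt (x i) (by simp)).trans_eq (mk_ord_toType κ),
        fun j => Germ.coe_lt.1 (not_le.1 (hx _ ⟨j, rfl⟩))⟩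
    exact h (by simpa using isRegularUF_mk_iff.2 hcover)
  rw [germOrderCof_eq_cof, ← Ordinal.cof_toType]
  exact (Order.cof_congr_of_strictMono (fun j k hjk => Germ.const_lt_iff.2 hjk) hcofinal).symm

theorem exists_fiber_forall_exists_lt {μ : Cardinal.{u}} {A S : Type u} (p : A → S)
    (w : A → Cardinal.{u}) (hS : #S < μ.ord.cof) (hw : ∀ c < μ, ∃ a, c < w a) :
    ∃ t, ∀ c < μ, ∃ a, p a = t ∧ c < w a := by
  by_contra! h
  choose c hc_lt hc using h
  obtain ⟨a, ha⟩ := hw _ (iSup_lt_of_lt_cof_ord hS hc_lt)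
  exact ha.not_ge ((hc (p a) a rfl).trans (le_ciSup bddAbove_of_small (p a)))

theorem isRegularUF_of_hasCardLTCover_sigma {lam μ : Cardinal.{u}} {A : Type u}
    (w : A → Cardinal.{u}) (hw : ∀ c < μ, ∃ a, c < w a)
    (h : HasCardLTCover D lam (Σ a, (w a).out)) : IsRegularUF D lam μ := by
  refine isRegularUF_iff_hasCardLTCover.2 (h.of_mk_le ?_)
  rw [mk_out, mk_sigma]
  simp only [mk_out]
  by_contra! hlt
  obtain ⟨a, ha⟩ := hw _ hlt
  exact ha.not_ge (le_sum w a)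

theorem isRegularUF_of_germOrderCof_ne {lam μ : Cardinal.{u}} (hlam : ℵ₀ ≤ lam) {A : Type u}
    (w : A → Cardinal.{u}) (hw : ∀ c < μ, ∃ a, c < w a) (hA : #A ≤ μ.ord.cof) (hA_one : 1 < #A)
    (hcover : HasCardLTCover D lam A) (hβ : ∀ a, HasCardLTCover D lam (w a).out)
    (hcof : germOrderCof D lam.ord.cof ≠ #A) : IsRegularUF D lam μ := by
  choose f hf_card hf_mem using hβ
  obtain ⟨S, p, ν, hS, hν, hfν⟩ :=
    exists_card_lt_eventually_le_bounds (fun a i => #(f a i)) hf_card hA_one hcof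
  obtain ⟨t, ht⟩ := exists_fiber_forall_exists_lt p w (hS.trans_le hA) hw
  let T : Set A := {a | p a = t}
  refine isRegularUF_of_hasCardLTCover_sigma (fun a : T => w a) (fun c hc => ?_) ?_
  · obtain ⟨a, ha, hca⟩ := ht c hc
    exact ⟨⟨a, ha⟩, hca⟩
  · refine (hcover.of_mk_le (mk_subtype_le T)).sigma hlam (fun a => f a.1)
      (fun a => hf_mem a.1) (ν t) (hν t) fun a => a.2 ▸ hfν a.1

end

theorem stmt10_general {I : Type u} (D : Ultrafilter I) (lam mu : Cardinal.{u})
    (hlam : ℵ₀ ≤ lam) (hsing : mu.ord.cof < mu) (hlt : lam < mu)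
    (hreg : ∀ mu' < mu, IsRegularUF D lam mu')
    (hcase : lam.IsRegular ∨ IsRegularUF D lam.ord.cof mu.ord.cof ∨
      germOrderCof D lam.ord.cof ≠ mu.ord.cof ∨
      (lam.ord.cof ≠ mu.ord.cof ∧ ¬ IsRegularUF D lam.ord.cof lam.ord.cof)) :
    IsRegularUF D lam mu := by
  have hmu_inf : ℵ₀ ≤ mu := hlam.trans hlt.le
  obtain ⟨w, hw_lt, hw⟩ := exists_forall_lt_forall_exists_lt_of_isSuccLimit
    (IsSingular.isSuccLimit ⟨hmu_inf, hsing.ne⟩)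
  have hβ : ∀ a, HasCardLTCover D lam (w a).out :=
    fun a => isRegularUF_iff_hasCardLTCover.1 (hreg _ (hw_lt a))
  have hA : #(mu.ord.cof.ord.ToType) = mu.ord.cof := mk_ord_toType _
  have hA_one : 1 < #(mu.ord.cof.ord.ToType) := by
    rw [hA]
    exact Ordinal.one_lt_cof_iff.2 (isSuccLimit_ord hmu_inf)
  have hcover : HasCardLTCover D lam mu.ord.cof.ord.ToType := by
    rw [← isRegularUF_mk_iff, hA]
    exact hreg _ hsing
  rcases hcase with ha | hb | hc | ⟨hd₁, hd₂⟩
  · rw [← ha.cof_ord] at hcover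
    exact isRegularUF_of_hasCardLTCover_sigma w hw (.sigma_of_cof hlam hcover hβ)
  · rw [← hA, isRegularUF_mk_iff] at hb
    exact isRegularUF_of_hasCardLTCover_sigma w hw (.sigma_of_cof hlam hb hβ)
  · exact isRegularUF_of_germOrderCof_ne hlam w hw hA.le hA_one hcover hβ (by rwa [hA])
  · refine isRegularUF_of_germOrderCof_ne hlam w hw hA.le hA_one hcover hβ ?_
    rwa [hA, germOrderCof_eq_of_not_isRegularUF hd₂, Ordinal.cof_ord_cof]

/-- Proposition 5.4: if `μ` is singular, `λ < μ`, `D` is `(λ, μ')`-regular for all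
`μ' < μ`, and one of the conditions (a)-(d) holds, then `D` is `(λ, μ)`-regular. -/
theorem stmt10 {I : Type u} (D : Ultrafilter I) (lam mu : Cardinal.{u})
    (hlam : ℵ₀ ≤ lam) (hmu : ℵ₀ ≤ mu) (hsing : mu.ord.cof < mu) (hlt : lam < mu)
    (hreg : ∀ mu' < mu, IsRegularUF D lam mu')
    (hcase : lam.IsRegular ∨ IsRegularUF D lam.ord.cof mu.ord.cof ∨
      germOrderCof D lam.ord.cof ≠ mu.ord.cof ∨
      (lam.ord.cof ≠ mu.ord.cof ∧ ¬ IsRegularUF D lam.ord.cof lam.ord.cof)) :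
    IsRegularUF D lam mu :=
  stmt10_general D lam mu hlam hsing hlt hreg hcase

end Paper
end

section
/- Let κ be a regular cardinal, D an ultrafilter on a set I, and f a κ-least function for D. Then for every infinite cardinal λ, D is (λ, κ)-regular if and only if {i ∈ I : cf f(i) < λ} ∈ D (where cf f(i) denotes the cofinality of the ordinal f(i)). -/
universe u

open Cardinal

namespace Paper

/-!
If `(X_β)_{β<κ}` witnesses `(λ, κ)`-regularity, every `i` lies in fewer than `λ` of the `X_β`.
Were `cf f(i) ≥ λ` on a set in `D`, then `g(i) = sup {β + 1 : i ∈ X_β, β < f(i)}` would stay below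
`f(i)` there, so `κ`-leastness bounds `g` by some `α < κ` modulo `D`; but `i ∈ X_α` and `α < f(i)`
for `D`-almost all `i`, which forces `α < g(i)`.

Conversely, let `C_i` be cofinal in `f(i)` of size `cf f(i)`. For `γ < κ`, the function picking a
point of `C_i` above `γ` lies below `f`, hence below some `h(γ) < κ` modulo `D`: the interval
`[γ, h(γ))` meets `C_i` for `D`-almost all `i`. Regularity of `κ` yields `κ` pairwise disjoint such
intervals below `κ`, and `X_β`, the set of `i` with `cf f(i) < λ` whose `C_i` meets the `β`-th
interval, puts each `i` in at most `|C_i| < λ` of the `X_β`.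
-/

open Function

theorem iInter_eq_empty_iff_forall_mk_lt {α ι : Type u} (X : ι → Set α) (lam : Cardinal.{u}) :
    (∀ B : Set ι, #B = lam → ⋂ β ∈ B, X β = ∅) ↔ ∀ a, #{β | a ∈ X β} < lam := by
  constructor
  · intro h a
    by_contra! hle
    obtain ⟨B, hB, hBcard⟩ := Cardinal.le_mk_iff_exists_subset.1 hle
    have ha : a ∈ ⋂ β ∈ B, X β := Set.mem_iInter₂.2 fun β hβ => hB hβ
    simp [h B hBcard] at ha
  · intro h B hB
    refine Set.eq_empty_of_forall_notMem fun a ha => (h a).not_ge ?_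
    rw [← hB]
    exact Cardinal.mk_le_mk_of_subset fun β hβ => Set.mem_iInter₂.1 ha β hβ

theorem isRegularUF_iff {I : Type u} (D : Ultrafilter I) (a b : Cardinal.{u}) :
    IsRegularUF D a b ↔ ∃ X : b.out → Set I, (∀ β, X β ∈ D) ∧ ∀ i, #{β | i ∈ X β} < a := by
  simp only [IsRegularUF, iInter_eq_empty_iff_forall_mk_lt]

theorem mk_le_of_pairwise_disjoint {α : Type*} {ι ι' : Type u} {T : ι → Set α}
    (hT : Pairwise (Disjoint on T)) (c : ι' → α) (hc : ∀ β, ∃ j, c j ∈ T β) : #ι ≤ #ι' := by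
  choose j hj using hc
  refine Cardinal.mk_le_of_injective (f := j) fun β β' hββ' => ?_
  by_contra hne
  exact Set.disjoint_left.1 (hT hne) (hj β) (hββ' ▸ hj β')

theorem exists_cofinal_family_card_eq_cof (o : Ordinal.{u}) :
    ∃ (ι : Type u) (c : ι → Ordinal.{u}),
      #ι = o.cof ∧ (∀ j, c j < o) ∧ ∀ γ < o, ∃ j, γ ≤ c j := by
  obtain ⟨s, hs, hcard⟩ := Order.exists_cof_eq o.ToType
  refine ⟨s, fun x => Ordinal.ToType.mk.symm x.1, by rw [hcard, Ordinal.cof_toType],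
    fun x => (Ordinal.ToType.mk.symm x.1).2, fun γ hγ => ?_⟩
  obtain ⟨y, hy, hle⟩ := hs (Ordinal.ToType.mk ⟨γ, hγ⟩)
  refine ⟨⟨y, hy⟩, ?_⟩
  show ((⟨γ, hγ⟩ : Set.Iio o) : Ordinal) ≤ _
  exact Subtype.coe_le_coe.2 (by simpa using Ordinal.ToType.mk.symm.monotone hle)

noncomputable def supRec (h : Ordinal.{u} → Ordinal.{u}) (γ : Ordinal.{u}) : Ordinal.{u} :=
  ⨆ η : Set.Iio γ, h (supRec h η)
termination_by γ
decreasing_by exact η.2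

theorem apply_supRec_le_supRec (h : Ordinal.{u} → Ordinal.{u}) {η γ : Ordinal.{u}}
    (hηγ : η < γ) : h (supRec h η) ≤ supRec h γ := by
  rw [supRec.eq_1 h γ]
  exact Ordinal.le_iSup (fun η : Set.Iio γ => h (supRec h η)) ⟨η, hηγ⟩

theorem pairwise_disjoint_Ico_supRec (h : Ordinal.{u} → Ordinal.{u}) :
    Pairwise (Disjoint on fun γ => Set.Ico (supRec h γ) (h (supRec h γ))) :=
  (pairwise_disjoint_on _).2 fun _ _ hηγ =>
    Set.Ico_disjoint_Ico_same.mono_right (Set.Ico_subset_Ico_left (apply_supRec_le_supRec h hηγ))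

theorem supRec_lt_ord_of_isRegular {κ : Cardinal.{u}} (hκ : κ.IsRegular)
    {h : Ordinal.{u} → Ordinal.{u}} (hh : ∀ γ < κ.ord, h γ < κ.ord) {γ : Ordinal.{u}}
    (hγ : γ < κ.ord) : supRec h γ < κ.ord := by
  induction γ using WellFoundedLT.induction with
  | ind γ IH =>
    rw [supRec.eq_1 h γ]
    apply Ordinal.lift_iSup_lt_of_lt_cof
    · rwa [← Ordinal.lift_cof, hκ.cof_ord, Cardinal.mk_Iio_ordinal, Cardinal.lift_lift,
        Cardinal.lift_lt, ← Cardinal.lt_ord]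
    · exact fun η => hh _ (IH η η.2 (η.2.trans hγ))

section KLeast

variable {I : Type u} {D : Ultrafilter I} {κ : Cardinal.{u}} {f : I → Ordinal.{u}}

theorem IsKLeastFunction.cof_lt_of_forall_mk_lt (hf : IsKLeastFunction D κ f)
    {lam : Cardinal.{u}} {ι : Type u} {o : ι → Set.Iio κ.ord} (ho : Surjective o)
    {X : ι → Set I} (hX : ∀ β, X β ∈ D) (hXlam : ∀ i, #{β | i ∈ X β} < lam) :
    {i | (f i).cof < lam} ∈ D := by
  by_contra hnot
  have hA : {i | lam ≤ (f i).cof} ∈ D := by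
    simpa [Set.compl_ofPred] using (Ultrafilter.compl_mem_iff_notMem.2 hnot)
  let S : I → Set ι := fun i => {β | i ∈ X β ∧ (o β : Ordinal) < f i}
  let g : I → Ordinal.{u} := fun i => min (⨆ β : S i, (o β : Ordinal) + 1) (f i)
  have hsup_lt : ∀ i, lam ≤ (f i).cof → ⨆ β : S i, (o β : Ordinal) + 1 < f i := fun i hi =>
    Ordinal.iSup_add_one_lt_of_lt_cof
      (((Cardinal.mk_le_mk_of_subset fun _ hβ => hβ.1).trans_lt (hXlam i)).trans_le hi)
      fun β => β.2.2
  obtain ⟨α, hα, hgα⟩ := hf.2.2 g (fun i => (min_le_right _ _).trans_lt (hf.1 i))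
    (Filter.mem_of_superset hA fun i hi => (min_le_left _ _).trans_lt (hsup_lt i hi))
  obtain ⟨β₀, hβ₀⟩ := ho ⟨α, hα⟩
  obtain ⟨i, hiX, hαf, hgi⟩ := Filter.nonempty_of_mem
    (Filter.inter_mem (hX β₀) (Filter.inter_mem (hf.2.1 α hα) hgα))
  have hβ₀S : β₀ ∈ S i := ⟨hiX, by rw [hβ₀]; exact hαf⟩
  have hαsup : α < ⨆ β : S i, (o β : Ordinal) + 1 := by
    simpa [hβ₀] using Ordinal.lt_iSup_add_one (fun β : S i => (o β : Ordinal)) ⟨β₀, hβ₀S⟩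
  exact hgi.not_gt (lt_min hαsup hαf)

theorem IsKLeastFunction.exists_lt_ord_eventually_mem_Ico (hf : IsKLeastFunction D κ f)
    {ι : I → Type u} (c : ∀ i, ι i → Ordinal.{u}) (hc_lt : ∀ i j, c i j < f i)
    (hc : ∀ i, ∀ γ < f i, ∃ j, γ ≤ c i j) {γ : Ordinal.{u}} (hγ : γ < κ.ord) :
    ∃ α < κ.ord, ∀ᶠ i in (D : Filter I), ∃ j, c i j ∈ Set.Ico γ α := by
  choose j hj using hc
  let g : I → Ordinal.{u} := fun i => if h : γ < f i then c i (j i γ h) else γ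
  have hg_lt : ∀ i, g i < κ.ord := fun i => by
    by_cases h : γ < f i
    · simpa [g, h] using (hc_lt i _).trans (hf.1 i)
    · simpa [g, h] using hγ
  obtain ⟨α, hα, hgα⟩ := hf.2.2 g hg_lt
    (Filter.mem_of_superset (hf.2.1 γ hγ) fun i (h : γ < f i) => by
      simpa [g, h] using hc_lt i (j i γ h))
  refine ⟨α, hα, ?_⟩
  filter_upwards [hf.2.1 γ hγ, hgα] with i hγi hgi
  exact ⟨j i γ hγi, hj i γ hγi, by simpa [g, hγi] using hgi⟩

theorem IsKLeastFunction.exists_forall_mk_lt (hf : IsKLeastFunction D κ f) (hκ : κ.IsRegular)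
    {lam : Cardinal.{u}} (hlam : lam ≠ 0) (hA : {i | (f i).cof < lam} ∈ D)
    {ι : Type u} {o : ι → Set.Iio κ.ord} (ho : Injective o) :
    ∃ X : ι → Set I, (∀ β, X β ∈ D) ∧ ∀ i, #{β | i ∈ X β} < lam := by
  choose ιc c hcard hc_lt hc using fun i => exists_cofinal_family_card_eq_cof (f i)
  choose! h hh_lt hh using fun γ (hγ : γ < κ.ord) =>
    hf.exists_lt_ord_eventually_mem_Ico c hc_lt hc hγ
  let T : ι → Set Ordinal.{u} := fun β => Set.Ico (supRec h (o β)) (h (supRec h (o β)))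
  have hT : Pairwise (Disjoint on T) :=
    ((pairwise_disjoint_Ico_supRec h).comp_of_injective Subtype.val_injective).comp_of_injective ho
  have hF_lt : ∀ β, supRec h (o β) < κ.ord := fun β => supRec_lt_ord_of_isRegular hκ hh_lt (o β).2
  let X : ι → Set I := fun β => {i | (f i).cof < lam ∧ ∃ j, c i j ∈ T β}
  refine ⟨X, fun β => Filter.inter_mem hA (hh _ (hF_lt β)), fun i => ?_⟩
  by_cases hi : (f i).cof < lam
  · calc #{β | i ∈ X β}
        ≤ #(ιc i) := mk_le_of_pairwise_disjoint (hT.comp_of_injective Subtype.val_injective)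
          (c i) fun β => β.2.2
      _ = (f i).cof := hcard i
      _ < lam := hi
  · simpa [X, hi] using pos_iff_ne_zero.2 hlam

end KLeast

/-- Theorem 6.3: if `κ` is regular and `f` is a `κ`-least function for `D`, then
`D` is `(λ, κ)`-regular if and only if `{i : cf (f i) < λ} ∈ D`. -/
theorem stmt12 {I : Type u} (D : Ultrafilter I) (κ : Cardinal.{u})
    (hκ : κ.IsRegular) (f : I → Ordinal.{u}) (hf : IsKLeastFunction D κ f)
    (lam : Cardinal.{u}) (hlam : ℵ₀ ≤ lam) :
    IsRegularUF D lam κ ↔ { i | (f i).cof < lam } ∈ D := by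
  obtain ⟨e⟩ : Nonempty (κ.out ≃ Set.Iio κ.ord) := by
    rw [← Cardinal.lift_mk_eq'.{u, u + 1}, Cardinal.mk_Iio_ordinal, Cardinal.mk_out]
    simp
  rw [isRegularUF_iff]
  constructor
  · rintro ⟨X, hX, hXlam⟩
    exact hf.cof_lt_of_forall_mk_lt e.surjective hX hXlam
  · intro hA
    exact hf.exists_forall_mk_lt hκ (Cardinal.aleph0_pos.trans_le hlam).ne' hA e.injective

end Paper
end

section
/- Let λ be a singular cardinal and κ a cardinal with κ > λ, cf λ ≠ cf κ, and λ^{<λ} < κ. If the ultrafilter D is (λ⁺, κ)-regular, then D is either λ-decomposable or (λ', κ)-regular for some cardinal λ' < λ. -/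
universe u

open Cardinal

/-!
Write `(λ⁺, κ)`-regularity as a `κ`-indexed family of members of `D` in which every point lies
in at most `λ` members. Each point `i` injects the indices of the members containing it into
`λ`; when `D` is not `λ`-decomposable, the `β`-th coordinates of these injections lie, for
`D`-almost all `i`, in a set `V_β ⊆ λ` of size `< λ`. Since `cf λ ≠ cf κ`, for `κ` many `β` these
sizes are bounded by a single `μ < λ`, and there are at most `λ^{<λ} < κ` such sets.

For a regular index cardinal above `λ^{<λ}`, pigeonhole keeps as many indices with one common
`V_β = V`, and cutting the members down to the points coding `β` into `V` leaves multiplicity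
`≤ |V| < λ`.
In general, a family of multiplicity `ρ < λ` indexed by the sets `V` themselves (the regular
case at `(λ^{<λ})⁺`) is intersected in as well: a point in the `β`-th new member codes `β` into
the union of at most `ρ` sets `V`, so the multiplicity drops to `ρ·μ < λ`. As a singular `λ` is
a limit cardinal, `(ρ·μ)⁺ < λ`.
-/

open Cardinal Set Function Order

namespace Cardinal

theorem self_le_powerlt_self {lam : Cardinal.{u}} (hlam : 1 < lam) : lam ≤ lam ^< lam := by
  simpa using le_powerlt lam hlam

theorem mk_bounded_set_le_powerlt {lam μ : Cardinal.{u}} (hlam : ℵ₀ ≤ lam) (hμ : μ < lam) :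
    #{v : Set lam.out // #v ≤ μ} ≤ lam ^< lam := by
  simpa [max_eq_left hlam] using (mk_bounded_set_le lam.out μ).trans (le_powerlt _ hμ)

theorem _root_.Monotone.iSup_lt_of_cof_lt {L : Type u} [LinearOrder L] {F : L → Cardinal.{u}}
    (hF : Monotone F) {κ : Cardinal.{u}} (hFκ : ∀ x, F x < κ) (hκL : κ.ord.cof < Order.cof L) :
    ⨆ x, F x < κ := by
  obtain ⟨N, hN, hNcard⟩ := Order.exists_cof_eq κ.ord.ToType
  let bound (n : N) : Cardinal := (Ordinal.ToType.mk.symm n.1).1.card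
  have hcover : IsCofinal (⋃ n : N, {x | F x ≤ bound n}) := by
    refine fun x => ⟨x, mem_iUnion.2 ?_, le_rfl⟩
    obtain ⟨n, hn, hle⟩ := hN (Ordinal.ToType.mk ⟨(F x).ord, ord_lt_ord.2 (hFκ x)⟩)
    exact ⟨⟨n, hn⟩, ord_le.1 (Ordinal.ToType.mk.le_symm_apply.2 hle)⟩
  obtain ⟨n, hn⟩ := isCofinal_of_isCofinal_iUnion hcover (by rwa [hNcard, Ordinal.cof_toType])
  refine (ciSup_le' fun x => ?_).trans_lt (lt_ord.1 (mem_Iio.1 (Ordinal.ToType.mk.symm n.1).2))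
  obtain ⟨y, hy, hxy⟩ := hn x
  exact (hF hxy).trans hy

theorem exists_mk_setOf_le_eq {L T : Type u} [LinearOrder L] (g : T → L) (hT : ℵ₀ ≤ #T)
    (hL : Order.cof L < #T) (hcof : Order.cof L ≠ (#T).ord.cof) :
    ∃ x, #{β | g β ≤ x} = #T := by
  by_contra! hne
  have hlt (x : L) : #{β | g β ≤ x} < #T := (mk_set_le _).lt_of_ne (hne x)
  obtain ⟨s, hs, hscard⟩ := Order.exists_cof_eq L
  have hsup : #T ≤ ⨆ x : s, #{β | g β ≤ x.1} := by
    have hcover : (⋃ x : s, {β | g β ≤ x.1}) = Set.univ := by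
      refine eq_univ_of_forall fun β => mem_iUnion.2 ?_
      obtain ⟨x, hx, hβx⟩ := hs (g β)
      exact ⟨⟨x, hx⟩, hβx⟩
    by_contra! hsup
    have := (mk_univ (α := T)).symm.trans_le (hcover ▸ mk_iUnion_le _)
    exact this.not_gt (mul_lt_of_lt hT (hscard ▸ hL) hsup)
  refine hsup.not_gt ?_
  rcases hcof.lt_or_gt with hcof | hcof
  · exact iSup_lt_of_lt_cof_ord (hscard ▸ hcof) fun x => hlt x
  · refine Monotone.iSup_lt_of_cof_lt (fun x y hxy => ?_) (fun x => hlt x) ?_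
    · exact mk_le_mk_of_subset fun β hβ => le_trans hβ hxy
    · rwa [Order.cof_eq_of_isCofinal hs]

theorem exists_lt_mk_setOf_le_eq {T : Type u} {lam : Cardinal.{u}} (c : T → Cardinal.{u})
    (hc : ∀ β, c β < lam) (hT : ℵ₀ ≤ #T) (hlam : lam.ord.cof < #T)
    (hcof : lam.ord.cof ≠ (#T).ord.cof) : ∃ μ < lam, #{β | c β ≤ μ} = #T := by
  obtain ⟨x, hx⟩ := exists_mk_setOf_le_eq
    (fun β => Ordinal.ToType.mk ⟨(c β).ord, ord_lt_ord.2 (hc β)⟩) hT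
    (by rwa [Ordinal.cof_toType]) (by rwa [Ordinal.cof_toType])
  refine ⟨(Ordinal.ToType.mk.symm x).1.card, lt_ord.1 (mem_Iio.1 (Ordinal.ToType.mk.symm x).2),
    (mk_set_le _).antisymm (hx ▸ mk_le_mk_of_subset fun β hβ => ?_)⟩
  exact ord_le.1 (Ordinal.ToType.mk.le_symm_apply.2 hβ)

end Cardinal

namespace Paper

section

variable {I : Type u} {D : Ultrafilter I} {T T' A : Type u}

/-- The multiplicity form of `(σ⁺, #T)`-regularity. -/
def HasRegularFamily (D : Ultrafilter I) (T : Type u) (σ : Cardinal.{u}) : Prop :=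
  ∃ X : T → Set I, (∀ β, X β ∈ D) ∧ ∀ i, #{β | i ∈ X β} ≤ σ

theorem isRegularUF_succ_iff {σ κ : Cardinal.{u}} :
    IsRegularUF D (succ σ) κ ↔ HasRegularFamily D κ.out σ := by
  refine exists_congr fun X => and_congr_right fun _ => ⟨fun h i => ?_, fun h B hB => ?_⟩
  · by_contra! hi
    obtain ⟨B, hBX, hB⟩ := le_mk_iff_exists_subset.1 (succ_le_of_lt hi)
    have hiB : i ∈ ⋂ β ∈ B, X β := mem_iInter₂.2 fun β hβ => hBX hβ
    rwa [h B hB] at hiB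
  · refine eq_empty_iff_forall_notMem.2 fun i hi => (lt_succ σ).not_ge ?_
    exact hB ▸ (mk_le_mk_of_subset fun β hβ => mem_iInter₂.1 hi β hβ).trans (h i)

theorem HasRegularFamily.comp {σ : Cardinal.{u}} (h : HasRegularFamily D T σ) {g : T' → T}
    (hg : Injective g) : HasRegularFamily D T' σ := by
  obtain ⟨X, hXD, hX⟩ := h
  exact ⟨X ∘ g, fun β => hXD (g β), fun i => (mk_preimage_of_injective g _ hg).trans (hX i)⟩

theorem HasRegularFamily.of_mk_le {σ : Cardinal.{u}} (h : HasRegularFamily D T σ)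
    (hT : #T' ≤ #T) : HasRegularFamily D T' σ :=
  let ⟨g⟩ := hT
  h.comp g.injective

theorem hasRegularFamily_one_of_subsingleton [Subsingleton T] : HasRegularFamily D T 1 :=
  ⟨fun _ => Set.univ, fun _ => Filter.univ_mem,
    fun _ => (mk_set_le _).trans (le_one_iff_subsingleton.2 ‹_›)⟩

structure Coding (D : Ultrafilter I) (T A : Type u) where
  set : T → Set I
  code : I → T → A
  codeSet : T → Set A
  set_mem : ∀ β, set β ∈ D
  injOn_code : ∀ i, InjOn (code i) {β | i ∈ set β}
  code_mem : ∀ i β, i ∈ set β → code i β ∈ codeSet β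

def Coding.comp (c : Coding D T A) {g : T' → T} (hg : Injective g) : Coding D T' A where
  set := c.set ∘ g
  code i := c.code i ∘ g
  codeSet := c.codeSet ∘ g
  set_mem β := c.set_mem (g β)
  injOn_code i := (c.injOn_code i).comp hg.injOn fun _ hβ => hβ
  code_mem i β := c.code_mem i (g β)

theorem exists_coding {lam : Cardinal.{u}} (hnd : ¬ IsDecomposable D lam) (hlam : lam ≠ 0)
    (h : HasRegularFamily D T lam) : ∃ c : Coding D T lam.out, ∀ β, #(c.codeSet β) < lam := by
  obtain ⟨X, hXD, hX⟩ := h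
  have : Nonempty lam.out := by rwa [← mk_ne_zero_iff, mk_out]
  have hcode (i : I) : ∃ e : T → lam.out, InjOn e {β | i ∈ X β} := by
    obtain ⟨g⟩ : Nonempty ({β | i ∈ X β} ↪ lam.out) := by rw [← le_def, mk_out]; exact hX i
    refine ⟨extend Subtype.val g fun _ => Classical.arbitrary _, injOn_iff_injective.2 ?_⟩
    convert g.injective using 1
    ext ⟨β, hβ⟩
    exact Subtype.val_injective.extend_apply _ _ ⟨β, hβ⟩
  choose e he using hcode
  have hsmall : ∀ f : I → lam.out, ∃ V : Set lam.out, #V < lam ∧ f ⁻¹' V ∈ D := by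
    simpa [IsDecomposable] using hnd
  choose V hV hVD using fun β => hsmall fun i => e i β
  exact ⟨⟨fun β => X β ∩ (fun i => e i β) ⁻¹' V β, e, V, fun β => Filter.inter_mem (hXD β) (hVD β),
    fun i => (he i).mono fun _ hβ => hβ.1, fun _ _ hβ => hβ.2⟩, hV⟩

theorem Coding.hasRegularFamily (c : Coding D T A) {ρ μ : Cardinal.{u}}
    (hμ : ∀ β, #(c.codeSet β) ≤ μ) (hZ : HasRegularFamily D (range c.codeSet) ρ) :
    HasRegularFamily D T (ρ * μ) := by
  obtain ⟨Z, hZD, hZ⟩ := hZ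
  let W β := c.set β ∩ Z ⟨c.codeSet β, mem_range_self β⟩
  refine ⟨W, fun β => Filter.inter_mem (c.set_mem β) (hZD _), fun i => ?_⟩
  have hmaps : MapsTo (c.code i) {β | i ∈ W β} (⋃ v ∈ {v | i ∈ Z v}, (v : Set A)) :=
    fun β hβ => mem_biUnion hβ.2 (c.code_mem i β hβ.1)
  calc #{β | i ∈ W β}
      = #(c.code i '' {β | i ∈ W β}) :=
        (mk_image_eq_of_injOn _ _ ((c.injOn_code i).mono fun _ hβ => hβ.1)).symm
    _ ≤ #(⋃ v ∈ {v | i ∈ Z v}, (v : Set A)) := mk_le_mk_of_subset hmaps.image_subset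
    _ ≤ #{v | i ∈ Z v} * ⨆ v : {v | i ∈ Z v}, #(v.1 : Set A) := mk_biUnion_le _ _
    _ ≤ ρ * μ := by
      refine mul_le_mul' (hZ i) (ciSup_le' fun ⟨⟨_, β, hβ⟩, _⟩ => ?_)
      exact hβ ▸ hμ β

theorem Coding.hasRegularFamily_of_codeSet_eq (c : Coding D T A) {v : Set A}
    (hv : ∀ β, c.codeSet β = v) : HasRegularFamily D T #v := by
  have : Subsingleton (range c.codeSet) := by
    refine ⟨?_⟩
    rintro ⟨_, β, rfl⟩ ⟨_, β', rfl⟩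
    exact Subtype.ext ((hv β).trans (hv β').symm)
  simpa using c.hasRegularFamily (fun β => by rw [hv]) hasRegularFamily_one_of_subsingleton

theorem Coding.exists_codeSet_mk_le (c : Coding D T A) {lam : Cardinal.{u}}
    (hc : ∀ β, #(c.codeSet β) < lam) (hT : ℵ₀ ≤ #T) (hlam : lam.ord.cof < #T)
    (hcof : lam.ord.cof ≠ (#T).ord.cof) :
    ∃ μ < lam, ∃ c' : Coding D T A, ∀ β, #(c'.codeSet β) ≤ μ := by
  obtain ⟨μ, hμ, hμT⟩ := exists_lt_mk_setOf_le_eq _ hc hT hlam hcof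
  obtain ⟨g⟩ := Cardinal.eq.1 hμT.symm
  exact ⟨μ, hμ, c.comp (Subtype.val_injective.comp g.injective), fun β => (g β).2⟩

theorem Coding.exists_codeSet_eq (c : Coding D T A) {μ : Cardinal.{u}}
    (hμ : ∀ β, #(c.codeSet β) ≤ μ) (hT : Cardinal.IsRegular #T)
    (hA : #{v : Set A // #v ≤ μ} < #T) :
    ∃ c' : Coding D T A, ∃ v : Set A, #v ≤ μ ∧ ∀ β, c'.codeSet β = v := by
  obtain ⟨v, ⟨g⟩⟩ := infinite_pigeonhole_card
    (fun β => (⟨c.codeSet β, hμ β⟩ : {v : Set A // #v ≤ μ})) #T le_rfl hT.aleph0_le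
    (by rwa [hT.cof_ord])
  exact ⟨c.comp (Subtype.val_injective.comp g.injective), v.1, v.2,
    fun β => congrArg Subtype.val (g β).2⟩

theorem exists_hasRegularFamily_lt_of_isRegular {lam : Cardinal.{u}}
    (hnd : ¬ IsDecomposable D lam) (hlam : ℵ₀ ≤ lam) (hT : Cardinal.IsRegular #T)
    (hpow : lam ^< lam < #T) (h : HasRegularFamily D T lam) :
    ∃ σ < lam, HasRegularFamily D T σ := by
  have hcofT : lam.ord.cof < #T := (Ordinal.cof_ord_le lam).trans_lt
    ((self_le_powerlt_self (one_lt_aleph0.trans_le hlam)).trans_lt hpow)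
  obtain ⟨c, hc⟩ := exists_coding hnd (aleph0_pos.trans_le hlam).ne' h
  obtain ⟨μ, hμ, c, hcμ⟩ :=
    c.exists_codeSet_mk_le hc hT.aleph0_le hcofT (by rw [hT.cof_ord]; exact hcofT.ne)
  obtain ⟨c, v, hv, hcv⟩ :=
    c.exists_codeSet_eq hcμ hT ((mk_bounded_set_le_powerlt hlam hμ).trans_lt hpow)
  exact ⟨#v, hv.trans_lt hμ, c.hasRegularFamily_of_codeSet_eq hcv⟩

theorem exists_hasRegularFamily_lt {lam : Cardinal.{u}} (hnd : ¬ IsDecomposable D lam)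
    (hlam : ℵ₀ ≤ lam) (hpow : lam ^< lam < #T) (hcof : lam.ord.cof ≠ (#T).ord.cof)
    (h : HasRegularFamily D T lam) : ∃ σ < lam, HasRegularFamily D T σ := by
  have hpowlam := self_le_powerlt_self (one_lt_aleph0.trans_le hlam)
  obtain ⟨ρ, hρ, hR⟩ : ∃ ρ < lam, HasRegularFamily D (succ (lam ^< lam)).out ρ := by
    refine exists_hasRegularFamily_lt_of_isRegular hnd hlam ?_ ?_ (h.of_mk_le ?_) <;> rw [mk_out]
    · exact isRegular_succ (hlam.trans hpowlam)
    · exact lt_succ _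
    · exact succ_le_of_lt hpow
  obtain ⟨c, hc⟩ := exists_coding hnd (aleph0_pos.trans_le hlam).ne' h
  obtain ⟨μ, hμ, c, hcμ⟩ := c.exists_codeSet_mk_le hc (hlam.trans (hpowlam.trans hpow.le))
    ((Ordinal.cof_ord_le lam).trans_lt (hpowlam.trans_lt hpow)) hcof
  have hrange : #(range c.codeSet) ≤ #(succ (lam ^< lam)).out := by
    rw [mk_out]
    refine le_trans ?_ ((mk_bounded_set_le_powerlt hlam hμ).trans (le_succ _))
    exact mk_le_mk_of_subset (range_subset_iff.2 hcμ : range c.codeSet ⊆ {v | #v ≤ μ})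
  exact ⟨ρ * μ, mul_lt_of_lt hlam hρ hμ, c.hasRegularFamily hcμ (hR.of_mk_le hrange)⟩

end

theorem stmt14_general {I : Type u} (D : Ultrafilter I) (lam κ : Cardinal.{u})
    (hlam : ℵ₀ ≤ lam) (hsing : lam.ord.cof < lam)
    (hcof : lam.ord.cof ≠ κ.ord.cof) (hpow : lam ^< lam < κ)
    (hreg : IsRegularUF D (Order.succ lam) κ) :
    IsDecomposable D lam ∨ ∃ lam' < lam, IsRegularUF D lam' κ := by
  refine or_iff_not_imp_left.2 fun hnd => ?_
  obtain ⟨σ, hσ, h⟩ := exists_hasRegularFamily_lt hnd hlam (by rwa [mk_out]) (by rwa [mk_out])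
    (isRegularUF_succ_iff.1 hreg)
  exact ⟨succ σ, (IsSingular.isSuccLimit ⟨hlam, hsing.ne⟩).succ_lt hσ, isRegularUF_succ_iff.2 h⟩

/-- Theorem 6.5(b): if `λ` is singular, `κ > λ`, `cf λ ≠ cf κ`, `λ^{<λ} < κ` and `D`
is `(λ⁺, κ)`-regular, then `D` is either `λ`-decomposable or `(λ', κ)`-regular for
some `λ' < λ`. -/
theorem stmt14 {I : Type u} (D : Ultrafilter I) (lam κ : Cardinal.{u})
    (hlam : ℵ₀ ≤ lam) (hsing : lam.ord.cof < lam)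
    (hκ : lam < κ) (hcof : lam.ord.cof ≠ κ.ord.cof) (hpow : lam ^< lam < κ)
    (hreg : IsRegularUF D (Order.succ lam) κ) :
    IsDecomposable D lam ∨ ∃ lam' < lam, IsRegularUF D lam' κ :=
  stmt14_general D lam κ hlam hsing hcof hpow hreg

end Paper
end

section
/- Let D be an ultrafilter on a set I and, for each i ∈ I, let D_i be an ultrafilter on a set I_i. Then for every infinite cardinal λ, the D-sum ∑_D D_i is (λ, λ)-regular if and only if either D is (λ, λ)-regular or {i ∈ I : D_i is (λ, λ)-regular} ∈ D. -/
/-! A family witnesses `(λ, λ)`-regularity of an ultrafilter iff every point lies in fewer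
than `λ` of its members. A witness for `D` pulls back along `Σ i, J i → I`, and witnesses for
the `D_i` glue fibrewise into one for the sum. Conversely, let `X β` be the set of `i` at which
the fibre of the `β`-th member of a witness for the sum lies in `D_i`. If `D` is not regular,
`D`-almost every `i` lies in `λ` of the `X β`, and the corresponding `λ` fibres witness
regularity of `D_i`. -/

universe u

open Cardinal

namespace Paper

open Set

variable {α α' : Type u}

theorem isRegularUF_self_iff {D : Ultrafilter α} {lam : Cardinal.{u}} :
    IsRegularUF D lam lam ↔
      ∃ X : lam.out → Set α, (∀ β, X β ∈ D) ∧ ∀ p, #{β | p ∈ X β} < lam := by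
  refine exists_congr fun X => and_congr_right fun _ => ⟨fun hX p => ?_, fun hX B hB => ?_⟩
  · by_contra! hp
    obtain ⟨B, hBp, hB⟩ := Cardinal.le_mk_iff_exists_subset.1 hp
    have hpB : p ∈ ⋂ β ∈ B, X β := mem_iInter₂.2 hBp
    rwa [hX B hB] at hpB
  · refine eq_empty_of_forall_notMem fun p hp => ?_
    have hBp : B ⊆ {β | p ∈ X β} := fun β hβ => mem_iInter₂.1 hp β hβ
    exact (hX p).not_ge (hB.symm.trans_le (Cardinal.mk_le_mk_of_subset hBp))

theorem isRegularUF_of_le_mk {E : Ultrafilter α} {lam : Cardinal.{u}} {Y : lam.out → Set α}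
    {S : Set lam.out} (hS : lam ≤ #S) (hYE : ∀ β ∈ S, Y β ∈ E)
    (hY : ∀ p, #{β | p ∈ Y β} < lam) : IsRegularUF E lam lam := by
  obtain ⟨e⟩ : Nonempty (lam.out ↪ S) := by rwa [← Cardinal.le_def, Cardinal.mk_out]
  refine isRegularUF_self_iff.2 ⟨fun γ => Y (e γ), fun γ => hYE _ (e γ).2, fun p => ?_⟩
  exact (Cardinal.mk_preimage_of_injective _ {β | p ∈ Y β}
    (Subtype.val_injective.comp e.injective)).trans_lt (hY p)

theorem setOf_le_mk_mem_of_not_isRegularUF {D : Ultrafilter α} {lam : Cardinal.{u}}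
    (hlam : lam ≠ 0) (hD : ¬ IsRegularUF D lam lam) {X : lam.out → Set α}
    (hX : ∀ β, X β ∈ D) : {p | lam ≤ #{β | p ∈ X β}} ∈ D := by
  by_contra hC
  rw [← Ultrafilter.compl_mem_iff_notMem] at hC
  -- otherwise cutting every `X β` down to this complement would witness regularity of `D`
  refine hD (isRegularUF_self_iff.2 ⟨fun β => X β ∩ {p | lam ≤ #{β | p ∈ X β}}ᶜ,
    fun β => Filter.inter_mem (hX β) hC, fun p => ?_⟩)
  by_cases hp : lam ≤ #{β | p ∈ X β}
  · have hempty : {β | p ∈ X β ∩ {p | lam ≤ #{β | p ∈ X β}}ᶜ} = ∅ :=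
      eq_empty_of_forall_notMem fun β hβ => hβ.2 hp
    rw [hempty, Cardinal.mk_eq_zero]
    exact pos_iff_ne_zero.2 hlam
  · exact (Cardinal.mk_le_mk_of_subset fun β hβ => hβ.1).trans_lt (not_le.1 hp)

theorem IsRegularUF.of_map {f : α → α'} {E : Ultrafilter α} {a b : Cardinal.{u}}
    (h : IsRegularUF (E.map f) a b) : IsRegularUF E a b := by
  obtain ⟨X, hXE, hX⟩ := h
  exact ⟨fun β => f ⁻¹' X β, hXE, fun B hB => by simp only [← preimage_iInter₂, hX B hB,
    preimage_empty]⟩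

section usum

variable {I : Type u} {J : I → Type u} (D : Ultrafilter I) (Di : ∀ i, Ultrafilter (J i))

theorem mem_usum {s : Set (Σ i, J i)} :
    s ∈ usum D Di ↔ {i | {j | (⟨i, j⟩ : Σ i, J i) ∈ s} ∈ Di i} ∈ D :=
  Iff.rfl

theorem map_fst_usum : (usum D Di).map Sigma.fst = D := by
  refine Ultrafilter.ext fun s => ?_
  have hs : {i | {j : J i | (⟨i, j⟩ : Σ i, J i) ∈ Sigma.fst ⁻¹' s} ∈ Di i} = s := by
    ext i
    by_cases hi : i ∈ s <;> simp [hi, ← Ultrafilter.mem_coe]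
  rw [Ultrafilter.mem_map, mem_usum, hs]

theorem IsRegularUF.usum_of_mem {a b : Cardinal.{u}} (ha : a ≠ 0)
    (h : {i | IsRegularUF (Di i) a b} ∈ D) : IsRegularUF (usum D Di) a b := by
  have : ∀ i, ∃ X : b.out → Set (J i), (IsRegularUF (Di i) a b → ∀ β, X β ∈ Di i) ∧
      ∀ B : Set b.out, #B = a → ⋂ β ∈ B, X β = ∅ := by
    intro i
    by_cases hi : IsRegularUF (Di i) a b
    · obtain ⟨X, hXD, hX⟩ := hi
      exact ⟨X, fun _ => hXD, hX⟩
    · refine ⟨fun _ => ∅, fun h => (hi h).elim, fun B hB => ?_⟩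
      obtain ⟨β, hβ⟩ : B.Nonempty := by
        rwa [← nonempty_coe_sort, ← Cardinal.mk_ne_zero_iff, hB]
      exact subset_empty_iff.1 (biInter_subset_of_mem hβ)
  choose X hXD hX using this
  refine ⟨fun β => {p | p.2 ∈ X p.1 β},
    fun β => (mem_usum D Di).2 (Filter.mem_of_superset h fun i hi => hXD i hi β),
    fun B hB => eq_empty_of_forall_notMem fun p hp => ?_⟩
  have hpB : p.2 ∈ ⋂ β ∈ B, X p.1 β := mem_iInter₂.2 fun β hβ => mem_iInter₂.1 hp β hβ
  rwa [hX p.1 B hB] at hpB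

end usum

/-- Proposition 7.4(d): `∑_D D_i` is `(λ, λ)`-regular iff either `D` is
`(λ, λ)`-regular or `{i : D_i is (λ, λ)-regular} ∈ D`. -/
theorem stmt17 {I : Type u} {J : I → Type u} (D : Ultrafilter I)
    (Di : ∀ i, Ultrafilter (J i)) (lam : Cardinal.{u}) (hlam : ℵ₀ ≤ lam) :
    IsRegularUF (usum D Di) lam lam ↔
      IsRegularUF D lam lam ∨ { i | IsRegularUF (Di i) lam lam } ∈ D := by
  have hlam₀ : lam ≠ 0 := (Cardinal.aleph0_pos.trans_le hlam).ne'
  refine ⟨fun h => or_iff_not_imp_left.2 fun hD => ?_, ?_⟩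
  · obtain ⟨Y, hYD, hY⟩ := isRegularUF_self_iff.1 h
    filter_upwards [setOf_le_mk_mem_of_not_isRegularUF hlam₀ hD hYD] with i hi
    exact isRegularUF_of_le_mk hi (fun _ hβ => hβ) fun j => hY ⟨i, j⟩
  · rintro (hD | hA)
    · exact (map_fst_usum D Di ▸ hD).of_map
    · exact IsRegularUF.usum_of_mem D Di hlam₀ hA

end Paper
end

section
/- Let λ, μ, κ be regular cardinals and suppose there is a sequence (f_α)_{α<κ} of functions from λ to μ which is increasing modulo eventual dominance (for all α < β < κ there is γ < λ such that f_α(δ) < f_β(δ) for every δ with γ < δ < λ), and such that no function g : λ → μ eventually dominates all the f_α (i.e. there is no g such that for every α < κ there is γ < λ with f_α(δ) < g(δ) for all δ with γ < δ < λ). Then every (κ, κ)-regular ultrafilter is either (λ, λ)-regular or (μ, μ)-regular. -/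
universe u

open Cardinal

namespace Paper

/-!
Fix a family witnessing `(κ, κ)`-regularity. Since each point of `I` lies in fewer than `κ` of its
members and `κ` is regular, a strict bound on their indices gives `g : I → κ` that is unbounded modulo
`D`, i.e. `α < g` on a set in `D` for every `α < κ`. Conversely, any such unbounded function into
`c` yields `(c, c)`-regularity. Now look at the columns `i ↦ f (g i) γ`, `γ < λ`. If one of them is
unbounded in `μ` modulo `D`, then `D` is `(μ, μ)`-regular. Otherwise each column is bounded modulo
`D` by some `k γ`; since `k` does not dominate the sequence, some `f α₀` reaches `k` cofinally often,
and the point beyond which `f α₀ < f (g i)` is then unbounded in `λ` modulo `D`.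
-/

section Unbounded

variable {I K L M : Type*} [LinearOrder K] [LinearOrder L] [LinearOrder M]

theorem exists_unbounded_of_eventually_le {l : Filter I} [l.NeBot] (g : I → K)
    (hg : ∀ α, ∀ᶠ i in l, α < g i) (f : K → L → M)
    (hinc : ∀ α β, α < β → ∃ γ, ∀ δ, γ < δ → f α δ < f β δ)
    (k : L → M) (hk : ∀ γ, ∀ᶠ i in l, f (g i) γ ≤ k γ)
    (α₀ : K) (hα₀ : ∀ γ, ∃ δ, γ < δ ∧ k δ ≤ f α₀ δ) :
    ∃ h : I → L, ∀ γ, ∀ᶠ i in l, γ < h i := by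
  obtain ⟨i₀, hi₀⟩ := (hg α₀).exists
  obtain ⟨γ₀, -⟩ := hinc _ _ hi₀
  have hthreshold : ∀ i, ∃ γ, α₀ < g i → ∀ δ, γ < δ → f α₀ δ < f (g i) δ := fun i => by
    by_cases hi : α₀ < g i
    · exact (hinc _ _ hi).imp fun _ hγ _ => hγ
    · exact ⟨γ₀, fun hi' => absurd hi' hi⟩
  choose h hh using hthreshold
  refine ⟨h, fun γ => ?_⟩
  obtain ⟨δ, hγδ, hkδ⟩ := hα₀ γ
  filter_upwards [hg α₀, hk δ] with i hi hki
  by_contra! hle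
  exact (hh i hi δ (hle.trans_lt hγδ)).not_ge (hki.trans hkδ)

theorem exists_unbounded_or_exists_unbounded (D : Ultrafilter I) (g : I → K)
    (hg : ∀ α, ∀ᶠ i in D, α < g i) (f : K → L → M)
    (hinc : ∀ α β, α < β → ∃ γ, ∀ δ, γ < δ → f α δ < f β δ)
    (hnodom : ¬ ∃ k : L → M, ∀ α, ∃ γ, ∀ δ, γ < δ → f α δ < k δ) :
    (∃ h : I → L, ∀ γ, ∀ᶠ i in D, γ < h i) ∨
      ∃ h : I → M, ∀ β, ∀ᶠ i in D, β < h i := by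
  by_cases hcol : ∃ γ, ∀ β, ∀ᶠ i in D, β < f (g i) γ
  · obtain ⟨γ, hγ⟩ := hcol
    exact Or.inr ⟨fun i => f (g i) γ, hγ⟩
  · have hbdd : ∀ γ, ∃ β, ∀ᶠ i in D, f (g i) γ ≤ β := by
      push Not at hcol
      exact hcol
    choose k hk using hbdd
    push Not at hnodom
    obtain ⟨α₀, hα₀⟩ := hnodom k
    exact Or.inl (exists_unbounded_of_eventually_le g hg f hinc k hk α₀ hα₀)

end Unbounded

theorem exists_forall_lt_of_mk_lt {c : Cardinal.{u}} (hc : c.IsRegular) {S : Set c.ord.ToType}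
    (hS : #S < c) : ∃ γ, ∀ x ∈ S, x < γ :=
  not_isCofinal_iff.1 fun hcof =>
    (Order.cof_le hcof).not_gt (by rwa [Ordinal.cof_toType, hc.cof_ord])

noncomputable def outEquivToTypeOrd (c : Cardinal.{u}) : c.out ≃ c.ord.ToType :=
  (Cardinal.eq.1 (by rw [Cardinal.mk_out, Cardinal.mk_ord_toType])).some

theorem isRegularUF_of_unbounded {I : Type u} (D : Ultrafilter I) {c : Cardinal.{u}}
    (F : I → c.ord.ToType) (hF : ∀ γ, ∀ᶠ i in D, γ < F i) :
    IsRegularUF D c c := by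
  refine ⟨fun b => {i | outEquivToTypeOrd c b < F i}, fun b => hF _, fun B hB => ?_⟩
  refine Set.eq_empty_iff_forall_notMem.2 fun i hi => ?_
  have hsub : outEquivToTypeOrd c '' B ⊆ Set.Iio (F i) := by
    rintro _ ⟨b, hb, rfl⟩
    exact Set.mem_iInter₂.1 hi b hb
  have hIio : #(Set.Iio (F i)) < c := by simpa using Cardinal.mk_Iio_lt (F i)
  have hlt := (Cardinal.mk_le_mk_of_subset hsub).trans_lt hIio
  rw [Cardinal.mk_image_eq (outEquivToTypeOrd c).injective, hB] at hlt
  exact hlt.false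

theorem exists_unbounded_of_isRegularUF {I : Type u} {D : Ultrafilter I} {c : Cardinal.{u}}
    (hc : c.IsRegular) (hD : IsRegularUF D c c) :
    ∃ g : I → c.ord.ToType, ∀ γ, ∀ᶠ i in D, γ < g i := by
  obtain ⟨X, hXD, hXinter⟩ := hD
  have hfew : ∀ i, #{b | i ∈ X b} < c := fun i => by
    refine (Cardinal.mk_set_le _).trans_eq (Cardinal.mk_out c) |>.lt_of_ne fun hi => ?_
    have hmem : i ∈ ⋂ b ∈ {b | i ∈ X b}, X b := Set.mem_iInter₂.2 fun b hb => hb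
    rwa [hXinter _ hi] at hmem
  have hbdd : ∀ i, ∃ γ, ∀ b, i ∈ X b → outEquivToTypeOrd c b < γ := fun i => by
    obtain ⟨γ, hγ⟩ := exists_forall_lt_of_mk_lt hc (S := outEquivToTypeOrd c '' {b | i ∈ X b})
      (by rw [Cardinal.mk_image_eq (outEquivToTypeOrd c).injective]; exact hfew i)
    exact ⟨γ, fun b hb => hγ _ ⟨b, hb, rfl⟩⟩
  choose g hg using hbdd
  exact ⟨g, fun γ => Filter.mem_of_superset (hXD ((outEquivToTypeOrd c).symm γ))
    fun i hi => by simpa using hg i _ hi⟩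

theorem stmt19_general {I : Type u} (D : Ultrafilter I) (lam mu κ : Cardinal.{u})
    (hκ : κ.IsRegular)
    (f : κ.ord.ToType → lam.ord.ToType → mu.ord.ToType)
    (hinc : ∀ α β, α < β → ∃ γ, ∀ δ, γ < δ → f α δ < f β δ)
    (hnodom : ¬ ∃ g : lam.ord.ToType → mu.ord.ToType,
        ∀ α, ∃ γ, ∀ δ, γ < δ → f α δ < g δ)
    (hreg : IsRegularUF D κ κ) :
    IsRegularUF D lam lam ∨ IsRegularUF D mu mu := by
  obtain ⟨g, hg⟩ := exists_unbounded_of_isRegularUF hκ hreg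
  rcases exists_unbounded_or_exists_unbounded D g hg f hinc hnodom with ⟨h, hh⟩ | ⟨h, hh⟩
  · exact Or.inl (isRegularUF_of_unbounded D h hh)
  · exact Or.inr (isRegularUF_of_unbounded D h hh)

/-- Proposition 8.1: if `λ, μ, κ` are regular and there is a sequence
`(f_α)_{α<κ}` of functions `λ → μ`, increasing modulo eventual dominance, not
eventually dominated by any single function, then every `(κ, κ)`-regular
ultrafilter is either `(λ, λ)`-regular or `(μ, μ)`-regular. -/
theorem stmt19 {I : Type u} (D : Ultrafilter I) (lam mu κ : Cardinal.{u})
    (hlam : lam.IsRegular) (hmu : mu.IsRegular) (hκ : κ.IsRegular)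
    (f : κ.ord.ToType → lam.ord.ToType → mu.ord.ToType)
    (hinc : ∀ α β, α < β → ∃ γ, ∀ δ, γ < δ → f α δ < f β δ)
    (hnodom : ¬ ∃ g : lam.ord.ToType → mu.ord.ToType,
        ∀ α, ∃ γ, ∀ δ, γ < δ → f α δ < g δ)
    (hreg : IsRegularUF D κ κ) :
    IsRegularUF D lam lam ∨ IsRegularUF D mu mu :=
  stmt19_general D lam mu κ hκ f hinc hnodom hreg

end Paper
end
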